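/- (Proposition 1, flat version.) Let A be a smooth connection on the trivial rank-n complex bundle over ℝ⁴ whose anti-self-dual curvature is covariantly closed: ∇ᵢF⁻ⱼₖ + ∇ⱼF⁻ₖᵢ + ∇ₖF⁻ᵢⱼ = 0 on ℝ⁴ for all i, j, k (this holds for any Yang–Mills connection). Let ψ₁, ψ₂ ∈ Cl be fixed and let ψ(x) = (Σ_{i=1}^4 xᵢeᵢ)·ψ₁ + ψ₂, a twistor spinor on ℝ⁴. Define Φ : ℝ⁴ → Matrix (Fin n) (Fin n) Cl entrywise by Φ(x) = Σ_{j<k} F⁻ⱼₖ(x) ⊗ eⱼeₖψ(x), i.e., the (α,β) entry of Φ(x) is Σ_{j<k} (F⁻ⱼₖ(x))_{αβ} · eⱼeₖψ(x) ∈ Cl. Then Φ satisfies the coupled Dirac equation: Σ_{i=1}^4 eᵢ · (∂ᵢΦ(x) + Aᵢ(x)Φ(x) − Φ(x)Aᵢ(x)) = 0 for all x ∈ ℝ⁴, where Aᵢ(x) is viewed as a matrix with entries in Cl via the inclusion ℂ → Cl and eᵢ· denotes entrywise left Clifford multiplication. -/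

import Mathlib

/-! Clifford algebra setup. -/

/-- The quadratic form `Q(v) = -(v₁² + v₂² + v₃² + v₄²)` on `ℂ⁴`. -/
noncomputable def Q : QuadraticForm ℂ (Fin 4 → ℂ) :=
  QuadraticMap.weightedSumSquares ℂ (fun _ : Fin 4 => (-1 : ℂ))

/-- The complex Clifford algebra of `Q`. -/
abbrev Cl : Type _ := CliffordAlgebra Q

/-- The standard generators `eᵢ`, satisfying `eᵢ² = -1`, `eᵢeⱼ = -eⱼeᵢ` for `i ≠ j`. -/
noncomputable def e (i : Fin 4) : Cl := CliffordAlgebra.ι Q (Pi.single i 1)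

/-! Connection and curvature on the trivial rank-`n` bundle over `ℝ⁴`. -/

/-- Partial derivative (in the `i`-th coordinate direction) of a matrix-valued
function on `ℝ⁴`, computed entrywise. -/
noncomputable def pd {n : ℕ} (i : Fin 4)
    (G : (Fin 4 → ℝ) → Matrix (Fin n) (Fin n) ℂ) :
    (Fin 4 → ℝ) → Matrix (Fin n) (Fin n) ℂ :=
  fun x => Matrix.of fun α β => fderiv ℝ (fun y => G y α β) x (Pi.single i 1)

/-- The curvature `Fᵢⱼ = ∂ᵢAⱼ − ∂ⱼAᵢ + AᵢAⱼ − AⱼAᵢ`. -/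
noncomputable def curv {n : ℕ} (A : Fin 4 → (Fin 4 → ℝ) → Matrix (Fin n) (Fin n) ℂ)
    (i j : Fin 4) : (Fin 4 → ℝ) → Matrix (Fin n) (Fin n) ℂ :=
  fun x => pd i (A j) x - pd j (A i) x + A i x * A j x - A j x * A i x

/-- The covariant derivative `∇ᵢG = ∂ᵢG + AᵢG − GAᵢ` on matrix-valued functions. -/
noncomputable def covD {n : ℕ} (A : Fin 4 → (Fin 4 → ℝ) → Matrix (Fin n) (Fin n) ℂ)
    (i : Fin 4) (G : (Fin 4 → ℝ) → Matrix (Fin n) (Fin n) ℂ) :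
    (Fin 4 → ℝ) → Matrix (Fin n) (Fin n) ℂ :=
  fun x => pd i G x + A i x * G x - G x * A i x

/-- The Hodge-dual pair of an (ordered) pair of distinct indices in `{0,1,2,3}`. -/
def dualPair : Fin 4 → Fin 4 → Fin 4 × Fin 4 :=
  ![![(0, 0), (2, 3), (3, 1), (1, 2)],
    ![(3, 2), (0, 0), (0, 3), (2, 0)],
    ![(1, 3), (3, 0), (0, 0), (0, 1)],
    ![(2, 1), (0, 2), (1, 0), (0, 0)]]

/-- The anti-self-dual part of the curvature: the antisymmetric family `F⁻` with
`F⁻₁₂ = ½(F₁₂ − F₃₄)`, `F⁻₂₃ = ½(F₂₃ − F₁₄)`, `F⁻₃₁ = ½(F₃₁ − F₂₄)`,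
`F⁻₃₄ = −F⁻₁₂`, `F⁻₁₄ = −F⁻₂₃`, `F⁻₂₄ = −F⁻₃₁`, `F⁻ᵢᵢ = 0`, `F⁻ⱼᵢ = −F⁻ᵢⱼ`. -/
noncomputable def curvASD {n : ℕ} (A : Fin 4 → (Fin 4 → ℝ) → Matrix (Fin n) (Fin n) ℂ)
    (i j : Fin 4) : (Fin 4 → ℝ) → Matrix (Fin n) (Fin n) ℂ :=
  fun x =>
    if i = j then 0
    else ((2 : ℂ)⁻¹) • (curv A i j x - curv A (dualPair i j).1 (dualPair i j).2 x)

/-! Spinor fields valued in `Cl` and their derivatives.  Since `Cl` carries no norm,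
the partial derivative of a `Cl`-valued function is expressed by testing against all
`ℂ`-linear functionals (an equivalent description, since `Cl` is a finite-dimensional
vector space and linear functionals separate points). -/

/-- `g` is the partial derivative of `f : ℝ⁴ → Cl` in the `i`-th coordinate direction. -/
def HasPDeriv (f : (Fin 4 → ℝ) → Cl) (i : Fin 4) (g : (Fin 4 → ℝ) → Cl) : Prop :=
  ∀ (lam : Cl →ₗ[ℂ] ℂ) (x : Fin 4 → ℝ),
    HasLineDerivAt ℝ (fun y => lam (f y)) (lam (g x)) x (Pi.single i 1)

/-- The twistor spinor `ψ(x) = (∑ xᵢeᵢ)·ψ₁ + ψ₂` on flat `ℝ⁴`. -/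
noncomputable def twistorSpinor (ψ₁ ψ₂ : Cl) (x : Fin 4 → ℝ) : Cl :=
  (∑ i : Fin 4, (x i : ℂ) • e i) * ψ₁ + ψ₂

/-- The coupled spinor field `Φ(x) = ∑_{j<k} F⁻ⱼₖ(x) ⊗ eⱼeₖψ(x)`, a matrix with entries
in `Cl`: its `(α,β)` entry is `∑_{j<k} (F⁻ⱼₖ(x))_{αβ} • eⱼeₖψ(x)`. -/
noncomputable def Phi {n : ℕ} (A : Fin 4 → (Fin 4 → ℝ) → Matrix (Fin n) (Fin n) ℂ)
    (ψ₁ ψ₂ : Cl) (x : Fin 4 → ℝ) : Matrix (Fin n) (Fin n) Cl :=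
  Matrix.of fun α β =>
    ∑ j : Fin 4, ∑ k : Fin 4,
      if j < k then (curvASD A j k x α β) • (e j * e k * twistorSpinor ψ₁ ψ₂ x) else 0

/-! Auxiliary lemmas -/

lemma Q_single (i : Fin 4) : Q (Pi.single i 1) = -1 := by
  simp [Q, QuadraticMap.weightedSumSquares_apply, Pi.single_apply]

lemma e_sq (i : Fin 4) (z : Cl) : e i * (e i * z) = -z := by
  rw [← mul_assoc, e, CliffordAlgebra.ι_sq_scalar, Q_single]
  simp

lemma e_isOrtho {i j : Fin 4} (h : i ≠ j) :
    Q.IsOrtho (Pi.single i 1) (Pi.single j 1) := by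
  rw [QuadraticMap.isOrtho_def]
  have hQ : ∀ v : Fin 4 → ℂ, Q v = ∑ l, (-1 : ℂ) • (v l * v l) := fun v => by
    simp [Q, QuadraticMap.weightedSumSquares_apply]
  rw [hQ, hQ, hQ, ← Finset.sum_add_distrib]
  refine Finset.sum_congr rfl fun l _ => ?_
  rcases eq_or_ne l i with rfl | hli <;> rcases eq_or_ne l j with rfl | hlj <;>
    simp_all [Pi.single_apply]

lemma e_anticomm {i j : Fin 4} (h : i ≠ j) (z : Cl) :
    e i * (e j * z) = -(e j * (e i * z)) :=
  CliffordAlgebra.ι_mul_ι_mul_of_isOrtho z (e_isOrtho h)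

lemma e10 (z : Cl) : e 1 * (e 0 * z) = -(e 0 * (e 1 * z)) := e_anticomm (by decide) z
lemma e20 (z : Cl) : e 2 * (e 0 * z) = -(e 0 * (e 2 * z)) := e_anticomm (by decide) z
lemma e21 (z : Cl) : e 2 * (e 1 * z) = -(e 1 * (e 2 * z)) := e_anticomm (by decide) z
lemma e30 (z : Cl) : e 3 * (e 0 * z) = -(e 0 * (e 3 * z)) := e_anticomm (by decide) z
lemma e31 (z : Cl) : e 3 * (e 1 * z) = -(e 1 * (e 3 * z)) := e_anticomm (by decide) z
lemma e32 (z : Cl) : e 3 * (e 2 * z) = -(e 2 * (e 3 * z)) := e_anticomm (by decide) z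

lemma contDiff_curvASD_entry {n : ℕ} (A : Fin 4 → (Fin 4 → ℝ) → Matrix (Fin n) (Fin n) ℂ)
    (hA : ∀ i α β, ContDiff ℝ (⊤ : ℕ∞) fun x => A i x α β) (j k : Fin 4) (α β : Fin n) :
    ContDiff ℝ (⊤ : ℕ∞) fun y => curvASD A j k y α β := by
  have h1 : ∀ (c d : Fin 4) (γ δ : Fin n), ContDiff ℝ (⊤ : ℕ∞) (fun y => pd c (A d) y γ δ) :=
    fun c d γ δ => ((hA d γ δ).fderiv_right (by simp)).clm_apply contDiff_const
  have hcurv : ∀ a b : Fin 4, ContDiff ℝ (⊤ : ℕ∞) (fun y => curv A a b y α β) := by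
    intro a b
    have : (fun y => curv A a b y α β)
        = fun y => pd a (A b) y α β - pd b (A a) y α β
            + ∑ γ, A a y α γ * A b y γ β - ∑ γ, A b y α γ * A a y γ β := by
      funext y
      simp [curv, Matrix.sub_apply, Matrix.add_apply, Matrix.mul_apply]
    rw [this]
    exact (((h1 a b α β).sub (h1 b a α β)).add
      (ContDiff.sum fun γ _ => (hA a α γ).mul (hA b γ β))).sub
      (ContDiff.sum fun γ _ => (hA b α γ).mul (hA a γ β))
  by_cases hjk : j = k
  · have : (fun y => curvASD A j k y α β) = fun _ => 0 := funext fun y => by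
      simp [curvASD, hjk]
    rw [this]; exact contDiff_const
  · have : (fun y => curvASD A j k y α β)
        = fun y => 2⁻¹ * (curv A j k y α β - curv A (dualPair j k).1 (dualPair j k).2 y α β) :=
      funext fun y => by
        simp [curvASD, hjk, Matrix.smul_apply, Matrix.sub_apply, smul_eq_mul]
    rw [this]
    exact contDiff_const.mul ((hcurv _ _).sub (hcurv _ _))

lemma hasLineDerivAt_curvASD_entry {n : ℕ} (A : Fin 4 → (Fin 4 → ℝ) → Matrix (Fin n) (Fin n) ℂ)
    (hA : ∀ i α β, ContDiff ℝ (⊤ : ℕ∞) fun x => A i x α β) (j k : Fin 4) (α β : Fin n)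
    (i : Fin 4) (x : Fin 4 → ℝ) :
    HasLineDerivAt ℝ (fun y => curvASD A j k y α β) (pd i (curvASD A j k) x α β) x
      (Pi.single i 1) :=
  (((contDiff_curvASD_entry A hA j k α β).differentiable (by simp) x).hasFDerivAt).hasLineDerivAt _

/-! Line derivative helpers. -/

lemma HasLineDerivAt.cmul {F g : (Fin 4 → ℝ) → ℂ} {F' g' : ℂ} {x v : Fin 4 → ℝ}
    (hF : HasLineDerivAt ℝ F F' x v) (hg : HasLineDerivAt ℝ g g' x v) :
    HasLineDerivAt ℝ (fun y => F y * g y) (F' * g x + F x * g') x v := by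
  have h1 : HasDerivAt (fun t : ℝ => F (x + t • v)) F' 0 := hF
  have h2 : HasDerivAt (fun t : ℝ => g (x + t • v)) g' 0 := hg
  have h3 := h1.mul h2
  simp only [zero_smul, add_zero] at h3
  exact h3

lemma HasLineDerivAt.csum {ι : Type*} (s : Finset ι) {F : ι → (Fin 4 → ℝ) → ℂ}
    {F' : ι → ℂ} {x v : Fin 4 → ℝ}
    (hF : ∀ l ∈ s, HasLineDerivAt ℝ (F l) (F' l) x v) :
    HasLineDerivAt ℝ (fun y => ∑ l ∈ s, F l y) (∑ l ∈ s, F' l) x v := by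
  have : HasDerivAt (fun t : ℝ => ∑ l ∈ s, F l (x + t • v)) (∑ l ∈ s, F' l) 0 :=
    HasDerivAt.fun_sum fun l hl => hF l hl
  exact this

lemma hasLineDerivAt_const' (c : ℂ) (x v : Fin 4 → ℝ) :
    HasLineDerivAt ℝ (fun _ : Fin 4 → ℝ => c) 0 x v := by
  have : HasDerivAt (fun _ : ℝ => c) 0 0 := hasDerivAt_const _ _
  exact this

lemma HasLineDerivAt.cadd_const {F : (Fin 4 → ℝ) → ℂ} {F' : ℂ} {x v : Fin 4 → ℝ}
    (hF : HasLineDerivAt ℝ F F' x v) (c : ℂ) :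
    HasLineDerivAt ℝ (fun y => F y + c) F' x v := by
  have h1 : HasDerivAt (fun t : ℝ => F (x + t • v)) F' 0 := hF
  exact h1.add_const c

lemma hasLineDerivAt_coord (l : Fin 4) (x v : Fin 4 → ℝ) :
    HasLineDerivAt ℝ (fun y : Fin 4 → ℝ => ((y l : ℝ) : ℂ)) ((v l : ℂ)) x v := by
  have h1 : HasDerivAt (fun t : ℝ => x l + t * v l) (v l) 0 := by
    simpa using ((hasDerivAt_id (0 : ℝ)).mul_const (v l)).const_add (x l)
  have h2 : HasDerivAt (fun t : ℝ => ((x l + t * v l : ℝ) : ℂ)) ((v l : ℂ)) 0 :=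
    h1.ofReal_comp
  exact h2

/-- Explicit candidate for the partial derivative of `Phi`. -/
noncomputable def Dc {n : ℕ} (A : Fin 4 → (Fin 4 → ℝ) → Matrix (Fin n) (Fin n) ℂ)
    (ψ₁ ψ₂ : Cl) (i : Fin 4) (x : Fin 4 → ℝ) : Matrix (Fin n) (Fin n) Cl :=
  Matrix.of fun α β =>
    ∑ j : Fin 4, ∑ k : Fin 4,
      if j < k then
        (pd i (curvASD A j k) x α β) • (e j * e k * twistorSpinor ψ₁ ψ₂ x)
          + (curvASD A j k x α β) • (e j * e k * (e i * ψ₁))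
      else 0

lemma lam_mul_psi (ψ₁ ψ₂ : Cl) (lam : Cl →ₗ[ℂ] ℂ) (w : Cl) (y : Fin 4 → ℝ) :
    lam (w * twistorSpinor ψ₁ ψ₂ y)
      = (∑ l, (y l : ℂ) * lam (w * (e l * ψ₁))) + lam (w * ψ₂) := by
  rw [twistorSpinor, mul_add, map_add]
  congr 1
  rw [Finset.sum_mul, Finset.mul_sum, map_sum]
  refine Finset.sum_congr rfl fun l _ => ?_
  rw [smul_mul_assoc, mul_smul_comm, map_smul, smul_eq_mul]

lemma hasPDeriv_Dc {n : ℕ} (A : Fin 4 → (Fin 4 → ℝ) → Matrix (Fin n) (Fin n) ℂ)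
    (hA : ∀ i α β, ContDiff ℝ (⊤ : ℕ∞) fun x => A i x α β) (ψ₁ ψ₂ : Cl) (i : Fin 4) (α β : Fin n) :
    HasPDeriv (fun y => Phi A ψ₁ ψ₂ y α β) i (fun y => Dc A ψ₁ ψ₂ i y α β) := by
  intro lam x
  have hfun : (fun y => lam (Phi A ψ₁ ψ₂ y α β))
      = fun y => ∑ j : Fin 4, ∑ k : Fin 4,
          if j < k then
            curvASD A j k y α β
              * ((∑ l, (y l : ℂ) * lam (e j * e k * (e l * ψ₁))) + lam (e j * e k * ψ₂))
          else 0 := by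
    funext y
    simp only [Phi, Matrix.of_apply, map_sum]
    refine Finset.sum_congr rfl fun j _ => Finset.sum_congr rfl fun k _ => ?_
    rw [apply_ite lam, map_zero, map_smul, smul_eq_mul, lam_mul_psi]
  have hval : lam (Dc A ψ₁ ψ₂ i x α β)
      = ∑ j : Fin 4, ∑ k : Fin 4,
          if j < k then
            pd i (curvASD A j k) x α β
              * ((∑ l, (x l : ℂ) * lam (e j * e k * (e l * ψ₁))) + lam (e j * e k * ψ₂))
              + curvASD A j k x α β
                * (∑ l, ((Pi.single (M := fun _ : Fin 4 => ℝ) i 1 l : ℝ) : ℂ) * lam (e j * e k * (e l * ψ₁)))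
          else 0 := by
    simp only [Dc, Matrix.of_apply, map_sum]
    refine Finset.sum_congr rfl fun j _ => Finset.sum_congr rfl fun k _ => ?_
    rw [apply_ite lam, map_zero, map_add, map_smul, map_smul, smul_eq_mul, smul_eq_mul,
      lam_mul_psi]
    congr 2
    rw [Finset.sum_eq_single i]
    · simp
    · intro l _ hl
      simp [Pi.single_apply, hl]
    · simp
  rw [hfun, hval]
  refine HasLineDerivAt.csum _ fun j _ => HasLineDerivAt.csum _ fun k _ => ?_
  by_cases hjk : j < k
  · simp only [if_pos hjk]
    refine (hasLineDerivAt_curvASD_entry A hA j k α β i x).cmul ?_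
    refine HasLineDerivAt.cadd_const ?_ _
    refine HasLineDerivAt.csum _ fun l _ => ?_
    have h1 : HasDerivAt (fun t : ℝ => (((x + t • (Pi.single i 1 : Fin 4 → ℝ)) l : ℝ) : ℂ))
        ((Pi.single (M := fun _ : Fin 4 => ℝ) i 1 l : ℂ)) 0 := hasLineDerivAt_coord l x _
    exact h1.mul_const _
  · simp only [if_neg hjk]
    exact hasLineDerivAt_const' 0 x _

lemma pd_neg {n : ℕ} (i : Fin 4) (G : (Fin 4 → ℝ) → Matrix (Fin n) (Fin n) ℂ)
    (x : Fin 4 → ℝ) : pd i (fun y => -(G y)) x = -(pd i G x) := by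
  ext γ δ
  simp only [pd, Matrix.of_apply, Matrix.neg_apply]
  rw [show (fun y => -G y γ δ) = fun y => -(G y γ δ) from rfl, fderiv_fun_neg]
  simp

lemma covD_neg {n : ℕ} (A : Fin 4 → (Fin 4 → ℝ) → Matrix (Fin n) (Fin n) ℂ) (i : Fin 4)
    (G : (Fin 4 → ℝ) → Matrix (Fin n) (Fin n) ℂ) (x : Fin 4 → ℝ) :
    covD A i (fun y => -(G y)) x = -(covD A i G x) := by
  simp only [covD, pd_neg, mul_neg, neg_mul]
  abel

lemma curv_symm {n : ℕ} (A : Fin 4 → (Fin 4 → ℝ) → Matrix (Fin n) (Fin n) ℂ)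
    (a b : Fin 4) (x : Fin 4 → ℝ) : curv A b a x = -(curv A a b x) := by
  simp only [curv]
  abel

lemma dual12 {n : ℕ} (A : Fin 4 → (Fin 4 → ℝ) → Matrix (Fin n) (Fin n) ℂ) :
    curvASD A 1 2 = fun x => -(curvASD A 0 3 x) := by
  funext x
  simp only [curvASD, show dualPair 1 2 = (0, 3) from rfl, show dualPair 0 3 = (1, 2) from rfl,
    show ((1 : Fin 4) = 2) = False by simp, show ((0 : Fin 4) = 3) = False by simp, if_false]
  rw [← smul_neg, neg_sub]

lemma dual13 {n : ℕ} (A : Fin 4 → (Fin 4 → ℝ) → Matrix (Fin n) (Fin n) ℂ) :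
    curvASD A 1 3 = curvASD A 0 2 := by
  funext x
  simp only [curvASD, show dualPair 1 3 = (2, 0) from rfl, show dualPair 0 2 = (3, 1) from rfl,
    show ((1 : Fin 4) = 3) = False by simp, show ((0 : Fin 4) = 2) = False by simp, if_false]
  rw [curv_symm A 0 2 x, curv_symm A 1 3 x]
  congr 1
  abel

lemma dual23 {n : ℕ} (A : Fin 4 → (Fin 4 → ℝ) → Matrix (Fin n) (Fin n) ℂ) :
    curvASD A 2 3 = fun x => -(curvASD A 0 1 x) := by
  funext x
  simp only [curvASD, show dualPair 2 3 = (0, 1) from rfl, show dualPair 0 1 = (2, 3) from rfl,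
    show ((2 : Fin 4) = 3) = False by simp, show ((0 : Fin 4) = 1) = False by simp, if_false]
  rw [← smul_neg, neg_sub]

lemma dual20 {n : ℕ} (A : Fin 4 → (Fin 4 → ℝ) → Matrix (Fin n) (Fin n) ℂ) :
    curvASD A 2 0 = fun x => -(curvASD A 0 2 x) := by
  funext x
  simp only [curvASD, show dualPair 2 0 = (1, 3) from rfl, show dualPair 0 2 = (3, 1) from rfl,
    show ((2 : Fin 4) = 0) = False by simp, show ((0 : Fin 4) = 2) = False by simp, if_false]
  rw [curv_symm A 0 2 x, curv_symm A 1 3 x, ← smul_neg]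
  congr 1
  abel

lemma dual30 {n : ℕ} (A : Fin 4 → (Fin 4 → ℝ) → Matrix (Fin n) (Fin n) ℂ) :
    curvASD A 3 0 = fun x => -(curvASD A 0 3 x) := by
  funext x
  simp only [curvASD, show dualPair 3 0 = (2, 1) from rfl, show dualPair 0 3 = (1, 2) from rfl,
    show ((3 : Fin 4) = 0) = False by simp, show ((0 : Fin 4) = 3) = False by simp, if_false]
  rw [curv_symm A 0 3 x, curv_symm A 1 2 x, ← smul_neg]
  congr 1
  abel

lemma dual31 {n : ℕ} (A : Fin 4 → (Fin 4 → ℝ) → Matrix (Fin n) (Fin n) ℂ) :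
    curvASD A 3 1 = fun x => -(curvASD A 0 2 x) := by
  funext x
  simp only [curvASD, show dualPair 3 1 = (0, 2) from rfl, show dualPair 0 2 = (3, 1) from rfl,
    show ((3 : Fin 4) = 1) = False by simp, show ((0 : Fin 4) = 2) = False by simp, if_false]
  rw [← smul_neg, neg_sub]

lemma covD_entry {n : ℕ} (A : Fin 4 → (Fin 4 → ℝ) → Matrix (Fin n) (Fin n) ℂ) (i : Fin 4)
    (G : (Fin 4 → ℝ) → Matrix (Fin n) (Fin n) ℂ) (x : Fin 4 → ℝ) (α β : Fin n) :
    covD A i G x α β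
      = pd i G x α β + ∑ γ, A i x α γ * G x γ β - ∑ γ, G x α γ * A i x γ β := by
  simp [covD, Matrix.add_apply, Matrix.sub_apply, Matrix.mul_apply]

lemma sum_smul_ite {n : ℕ} (a : Fin n → ℂ) (f : Fin n → Fin 4 → Fin 4 → ℂ)
    (M : Fin 4 → Fin 4 → Cl) :
    ∑ γ, a γ • (∑ j : Fin 4, ∑ k : Fin 4, if j < k then f γ j k • M j k else 0)
      = ∑ j : Fin 4, ∑ k : Fin 4, if j < k then (∑ γ, a γ * f γ j k) • M j k else 0 := by
  simp only [Finset.smul_sum, smul_ite, smul_smul, smul_zero]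
  rw [Finset.sum_comm]
  refine Finset.sum_congr rfl fun j _ => ?_
  rw [Finset.sum_comm]
  refine Finset.sum_congr rfl fun k _ => ?_
  split
  · rw [← Finset.sum_smul]
  · simp

/-- Proposition 1, flat version.  Let `A` be a smooth connection on the
trivial rank-`n` complex bundle over `ℝ⁴` whose anti-self-dual curvature is covariantly
closed (as holds for any Yang–Mills connection).  For fixed `ψ₁, ψ₂ ∈ Cl` let
`ψ(x) = (∑ xᵢeᵢ)ψ₁ + ψ₂` and `Φ(x) = ∑_{j<k} F⁻ⱼₖ(x) ⊗ eⱼeₖψ(x)`.  Then `Φ` satisfies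
the coupled Dirac equation `∑ᵢ eᵢ · (∂ᵢΦ + AᵢΦ − ΦAᵢ) = 0`, where `Aᵢ` is viewed as a
matrix with entries in `Cl` and `eᵢ ·` is entrywise left Clifford multiplication. -/
theorem coupled_dirac_of_asd_covariantly_closed {n : ℕ}
    (A : Fin 4 → (Fin 4 → ℝ) → Matrix (Fin n) (Fin n) ℂ)
    (hA : ∀ i α β, ContDiff ℝ (⊤ : ℕ∞) fun x => A i x α β)
    (hclosed : ∀ (i j k : Fin 4) (x : Fin 4 → ℝ),
      covD A i (curvASD A j k) x + covD A j (curvASD A k i) x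
        + covD A k (curvASD A i j) x = 0)
    (ψ₁ ψ₂ : Cl)
    (DPhi : Fin 4 → (Fin 4 → ℝ) → Matrix (Fin n) (Fin n) Cl)
    (hDPhi : ∀ (i : Fin 4) (α β : Fin n),
      HasPDeriv (fun y => Phi A ψ₁ ψ₂ y α β) i (fun y => DPhi i y α β))
    (x : Fin 4 → ℝ) :
    ∑ i : Fin 4,
      e i • (DPhi i x
        + (A i x).map (algebraMap ℂ Cl) * Phi A ψ₁ ψ₂ x
        - Phi A ψ₁ ψ₂ x * (A i x).map (algebraMap ℂ Cl)) = 0 := by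
  have hD : ∀ (i : Fin 4) (y : Fin 4 → ℝ), DPhi i y = Dc A ψ₁ ψ₂ i y := by
    intro i y
    ext α β
    have huniq : ∀ lam : Module.Dual ℂ Cl,
        lam (DPhi i y α β - Dc A ψ₁ ψ₂ i y α β) = 0 := fun lam => by
      rw [map_sub, (hDPhi i α β lam y).unique (hasPDeriv_Dc A hA ψ₁ ψ₂ i α β lam y), sub_self]
    exact sub_eq_zero.mp ((Module.forall_dual_apply_eq_zero_iff ℂ _).mp huniq)
  have hEntry : ∀ (i : Fin 4) (α β : Fin n),
      (DPhi i x + (A i x).map (algebraMap ℂ Cl) * Phi A ψ₁ ψ₂ x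
        - Phi A ψ₁ ψ₂ x * (A i x).map (algebraMap ℂ Cl)) α β
      = ∑ j : Fin 4, ∑ k : Fin 4, if j < k then
          (covD A i (curvASD A j k) x α β) • (e j * e k * twistorSpinor ψ₁ ψ₂ x)
            + (curvASD A j k x α β) • (e j * e k * (e i * ψ₁)) else 0 := by
    intro i α β
    rw [Matrix.sub_apply, Matrix.add_apply, hD, Matrix.mul_apply, Matrix.mul_apply]
    have hl : ∀ γ, (A i x).map (algebraMap ℂ Cl) α γ * Phi A ψ₁ ψ₂ x γ β
        = A i x α γ • Phi A ψ₁ ψ₂ x γ β := fun γ => by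
      rw [Matrix.map_apply, ← Algebra.smul_def]
    have hr : ∀ γ, Phi A ψ₁ ψ₂ x α γ * (A i x).map (algebraMap ℂ Cl) γ β
        = A i x γ β • Phi A ψ₁ ψ₂ x α γ := fun γ => by
      rw [Matrix.map_apply, ← Algebra.commutes, ← Algebra.smul_def]
    simp only [hl, hr]
    simp only [Phi, Matrix.of_apply]
    rw [sum_smul_ite (fun γ => A i x α γ) (fun γ j k => curvASD A j k x γ β) _,
        sum_smul_ite (fun γ => A i x γ β) (fun γ j k => curvASD A j k x α γ) _]
    simp only [Dc, Matrix.of_apply]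
    simp only [← Finset.sum_add_distrib, ← Finset.sum_sub_distrib]
    refine Finset.sum_congr rfl fun j _ => Finset.sum_congr rfl fun k _ => ?_
    by_cases hjk : j < k
    · simp only [if_pos hjk]
      rw [covD_entry]
      have hcomm : ∑ γ, A i x γ β * curvASD A j k x α γ
          = ∑ γ, curvASD A j k x α γ * A i x γ β :=
        Finset.sum_congr rfl fun γ _ => mul_comm _ _
      rw [hcomm, sub_smul, add_smul]
      abel
    · simp [if_neg hjk]
  ext α β
  simp only [Matrix.sum_apply, Matrix.smul_apply, smul_eq_mul, Matrix.zero_apply]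
  simp only [hEntry]
  simp only [Fin.sum_univ_four]
  have c00 : ((0:Fin 4) < 0) = False := by simp
  have c11 : ((1:Fin 4) < 1) = False := by simp
  have c22 : ((2:Fin 4) < 2) = False := by simp
  have c33 : ((3:Fin 4) < 3) = False := by simp
  have c01 : ((0:Fin 4) < 1) = True := by decide
  have c02 : ((0:Fin 4) < 2) = True := by decide
  have c03 : ((0:Fin 4) < 3) = True := by decide
  have c12 : ((1:Fin 4) < 2) = True := by decide
  have c13 : ((1:Fin 4) < 3) = True := by decide
  have c23 : ((2:Fin 4) < 3) = True := by decide
  have c10 : ((1:Fin 4) < 0) = False := by decide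
  have c20 : ((2:Fin 4) < 0) = False := by decide
  have c21 : ((2:Fin 4) < 1) = False := by decide
  have c30 : ((3:Fin 4) < 0) = False := by decide
  have c31 : ((3:Fin 4) < 1) = False := by decide
  have c32 : ((3:Fin 4) < 2) = False := by decide
  simp only [c00, c11, c22, c33, c01, c02, c03, c12, c13, c23, c10, c20, c21, c30, c31, c32,
    if_true, if_false, add_zero, zero_add]
  simp only [dual12 A, dual13 A, dual23 A, covD_neg, Matrix.neg_apply]
  -- Bianchi-type identities
  have I1 := hclosed 0 1 2 x
  simp only [dual12 A, dual20 A, covD_neg] at I1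
  have I1e := congrArg (fun M : Matrix (Fin n) (Fin n) ℂ => M α β) I1
  simp only [Matrix.add_apply, Matrix.neg_apply, Matrix.zero_apply] at I1e
  have I2 := hclosed 0 1 3 x
  simp only [dual13 A, dual30 A, covD_neg] at I2
  have I2e := congrArg (fun M : Matrix (Fin n) (Fin n) ℂ => M α β) I2
  simp only [Matrix.add_apply, Matrix.neg_apply, Matrix.zero_apply] at I2e
  have I3 := hclosed 0 2 3 x
  simp only [dual23 A, dual30 A, covD_neg] at I3
  have I3e := congrArg (fun M : Matrix (Fin n) (Fin n) ℂ => M α β) I3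
  simp only [Matrix.add_apply, Matrix.neg_apply, Matrix.zero_apply] at I3e
  have I4 := hclosed 1 2 3 x
  simp only [dual23 A, dual31 A, dual12 A, covD_neg] at I4
  have I4e := congrArg (fun M : Matrix (Fin n) (Fin n) ℂ => M α β) I4
  simp only [Matrix.add_apply, Matrix.neg_apply, Matrix.zero_apply] at I4e
  -- distribute and normalize Clifford monomials
  simp only [mul_add, mul_sub, mul_neg, neg_mul, mul_smul_comm, smul_neg, neg_neg, mul_assoc]
  simp only [e_sq, e10, e20, e21, e30, e31, e32, mul_neg, smul_neg, neg_neg]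
  match_scalars <;>
    first
      | ring1
      | linear_combination I1e
      | linear_combination I2e
      | linear_combination I3e
      | linear_combination I4e
      | linear_combination -I1e
      | linear_combination -I2e
      | linear_combination -I3e
      | linear_combination -I4e
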